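/- arXiv:1903.10942 — 4 statements merged into one kernel-verified Lean document; each statement's English description precedes it below -/
import Mathlib

section
/- Let L ⊆ ℝ² be a closed line segment of length |L| < 2r. Define the r-spindle S(L,r) as the intersection of all closed balls of radius r whose boundary spheres contain both endpoints of L. Then the maximal distance from a point of S(L,r) to L is r − √(r² − |L|²/4). -/
/-!
Let `m` be the midpoint of `[x, y]`, `d = |xy|` and `h = √(r² - d²/4)`. The centres `c` of the
balls defining the spindle are exactly the points with `|cm| = h` and `cm ⟂ xy`. Hence the point
`m + (r - h) u`, for a unit normal `u`, lies in every such ball (triangle inequality through `m`),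
while its distance to the segment is at least its height `r - h` above the line `xy`.
Conversely, write a point `p` of the spindle as `m + z + s v` with `z` along `xy`, `v` a unit
normal and `s ≥ 0`; the ball centred at `m - h v` forces `|z|² + (s + h)² ≤ r²`, so `s ≤ r - h`
and `|z| ≤ d/2`, i.e. `m + z` is a point of the segment within `r - h` of `p`.
-/

open Metric Module Submodule
open scoped RealInnerProductSpace

lemma Real.biSup_eq_of_forall_le_of_le {α : Type*} {S : Set α} {f : α → ℝ} {B : ℝ} (hB : 0 ≤ B)
    (hle : ∀ p ∈ S, f p ≤ B) {a : α} (ha : a ∈ S) (hfa : B ≤ f a) :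
    ⨆ p ∈ S, f p = B := by
  refine le_antisymm (Real.iSup_le (fun p => Real.iSup_le (hle p) hB) hB) ?_
  have hbdd : BddAbove (⋃ p, Set.range fun _ : p ∈ S => f p) := by
    refine ⟨B, ?_⟩
    simp only [mem_upperBounds, Set.mem_iUnion, Set.mem_range]
    rintro _ ⟨p, hp, rfl⟩
    exact hle p hp
  exact hfa.trans (le_ciSup₂ (f := fun p _ => f p) hbdd a ha)

lemma Submodule.exists_norm_eq_one {F : Type*} [NormedAddCommGroup F] [NormedSpace ℝ F]
    (K : Submodule ℝ F) [Nontrivial K] : ∃ v ∈ K, ‖v‖ = 1 := by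
  obtain ⟨v, hv⟩ := exists_ne (0 : K)
  have hv' : (v : F) ≠ 0 := by simpa using hv
  exact ⟨‖(v : F)‖⁻¹ • (v : F), K.smul_mem _ v.2, norm_smul_inv_norm hv'⟩

lemma Submodule.exists_norm_eq_one_smul_eq {F : Type*} [NormedAddCommGroup F] [NormedSpace ℝ F]
    (K : Submodule ℝ F) [Nontrivial K] {w : F} (hw : w ∈ K) :
    ∃ v ∈ K, ‖v‖ = 1 ∧ w = ‖w‖ • v := by
  rcases eq_or_ne w 0 with rfl | hw0
  · obtain ⟨v, hvK, hv⟩ := K.exists_norm_eq_one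
    exact ⟨v, hvK, hv, by simp⟩
  · refine ⟨‖w‖⁻¹ • w, K.smul_mem _ hw, norm_smul_inv_norm hw0, ?_⟩
    rw [smul_inv_smul₀ (norm_ne_zero_iff.2 hw0)]

section

variable {E : Type*} [NormedAddCommGroup E] [InnerProductSpace ℝ E]

lemma nontrivial_orthogonal_span_singleton (hE : 2 ≤ finrank ℝ E) (v : E) :
    Nontrivial (ℝ ∙ v)ᗮ := by
  have : FiniteDimensional ℝ E := Module.finite_of_finrank_pos (by omega)
  apply nontrivial_of_finrank_pos (R := ℝ)
  have hspan : finrank ℝ (ℝ ∙ v) ≤ 1 := by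
    simpa using finrank_span_le_card (R := ℝ) ({v} : Set E)
  have := (ℝ ∙ v).finrank_add_finrank_orthogonal
  omega

def spindle (x y : E) (r : ℝ) : Set E :=
  {p | ∀ c, dist c x = r → dist c y = r → p ∈ closedBall c r}

variable {x y : E}

lemma dist_midpoint_of_dist_eq_of_dist_eq {c : E} {r h : ℝ} (hh : 0 ≤ h)
    (hrh : r ^ 2 = h ^ 2 + (dist x y / 2) ^ 2) (hcx : dist c x = r) (hcy : dist c y = r) :
    dist c (midpoint ℝ x y) = h := by
  have := EuclideanGeometry.dist_sq_add_dist_sq_eq_two_mul_dist_midpoint_sq_add_half_dist_sq c x y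
  rw [hcx, hcy] at this
  exact (pow_left_inj₀ dist_nonneg hh two_ne_zero).1 (by linarith)

lemma dist_midpoint_add_smul_left_sq {v : E} (hv : ‖v‖ = 1) (hvxy : ⟪v, y - x⟫ = 0) (a : ℝ) :
    dist (midpoint ℝ x y + a • v) x ^ 2 = a ^ 2 + (dist x y / 2) ^ 2 := by
  have hsplit : midpoint ℝ x y + a • v - x = a • v + (2⁻¹ : ℝ) • (y - x) := by
    simp only [midpoint_eq_smul_add, invOf_eq_inv]
    module
  rw [dist_eq_norm, hsplit, norm_add_sq_real, inner_smul_left, inner_smul_right, hvxy,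
    norm_smul, norm_smul, hv, dist_eq_norm', Real.norm_eq_abs, Real.norm_eq_abs]
  simp only [mul_zero, add_zero, mul_one, sq_abs, abs_inv, abs_two]
  ring

lemma dist_midpoint_add_smul_eq {v : E} (hv : ‖v‖ = 1) (hvxy : ⟪v, y - x⟫ = 0) {a r : ℝ}
    (hr : 0 ≤ r) (har : r ^ 2 = a ^ 2 + (dist x y / 2) ^ 2) :
    dist (midpoint ℝ x y + a • v) x = r ∧ dist (midpoint ℝ x y + a • v) y = r := by
  have hvyx : ⟪v, x - y⟫ = 0 := by rw [← neg_sub, inner_neg_right, hvxy, neg_zero]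
  have hx := dist_midpoint_add_smul_left_sq hv hvxy a
  have hy := dist_midpoint_add_smul_left_sq hv hvyx a
  rw [midpoint_comm, dist_comm y x, ← har] at hy
  rw [← har] at hx
  exact ⟨(pow_left_inj₀ dist_nonneg hr two_ne_zero).1 hx,
    (pow_left_inj₀ dist_nonneg hr two_ne_zero).1 hy⟩

lemma abs_inner_sub_le_infDist_segment {u : E} (hu : ‖u‖ = 1) (huxy : ⟪u, y - x⟫ = 0) (p : E) :
    |⟪u, p - x⟫| ≤ infDist p (segment ℝ x y) := by
  rw [le_infDist ⟨x, left_mem_segment ℝ x y⟩, segment_eq_image']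
  rintro _ ⟨θ, -, rfl⟩
  calc |⟪u, p - x⟫| = |⟪u, p - (x + θ • (y - x))⟫| := by
        rw [sub_add_eq_sub_sub, inner_sub_right _ (p - x), inner_smul_right, huxy, mul_zero,
          sub_zero]
    _ ≤ ‖u‖ * ‖p - (x + θ • (y - x))‖ := abs_real_inner_le_norm _ _
    _ = dist p (x + θ • (y - x)) := by rw [hu, one_mul, dist_eq_norm]

lemma midpoint_add_mem_segment {z : E} (hz : z ∈ ℝ ∙ (y - x)) (hzxy : ‖z‖ ≤ dist x y / 2) :
    midpoint ℝ x y + z ∈ segment ℝ x y := by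
  obtain ⟨τ, rfl⟩ := mem_span_singleton.1 hz
  rcases eq_or_ne x y with rfl | hne
  · simp
  have hτ : |τ| ≤ 2⁻¹ := by
    rw [norm_smul, Real.norm_eq_abs, ← dist_eq_norm', ← le_div_iff₀ (dist_pos.2 hne)] at hzxy
    rwa [div_div_cancel_left' (dist_ne_zero.2 hne)] at hzxy
  obtain ⟨hτl, hτr⟩ := abs_le.1 hτ
  rw [segment_eq_image']
  refine ⟨τ + 2⁻¹, ⟨by linarith, by linarith⟩, ?_⟩
  simp only [midpoint_eq_smul_add, invOf_eq_inv]
  module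

lemma infDist_segment_le_of_mem_spindle [Nontrivial (ℝ ∙ (y - x))ᗮ] {r h : ℝ} (hr : 0 ≤ r)
    (hh : 0 ≤ h) (hrh : r ^ 2 = h ^ 2 + (dist x y / 2) ^ 2) {p : E} (hp : p ∈ spindle x y r) :
    infDist p (segment ℝ x y) ≤ r - h := by
  set m := midpoint ℝ x y
  obtain ⟨z, hz, w, hw, hpzw⟩ := (ℝ ∙ (y - x)).exists_add_mem_mem_orthogonal (p - m)
  obtain ⟨v, hvK, hv, hwv⟩ := (ℝ ∙ (y - x))ᗮ.exists_norm_eq_one_smul_eq hw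
  have hvxy : ⟪v, y - x⟫ = 0 := mem_orthogonal_singleton_iff_inner_left.1 hvK
  have hzv : ⟪z, v⟫ = 0 := inner_right_of_mem_orthogonal hz hvK
  -- the ball centred on the far side of the segment from `p` is the one that confines `p`
  obtain ⟨hcx, hcy⟩ := dist_midpoint_add_smul_eq hv hvxy (a := -h) hr (by rw [neg_sq, hrh])
  have hpc : dist p (m + (-h) • v) ^ 2 = ‖z‖ ^ 2 + (‖w‖ + h) ^ 2 := by
    have : p - (m + (-h) • v) = z + (‖w‖ + h) • v := by
      rw [sub_add_eq_sub_sub, hpzw]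
      nth_rw 1 [hwv]
      module
    rw [dist_eq_norm, this, norm_add_sq_real, inner_smul_right, hzv, norm_smul, hv,
      Real.norm_eq_abs, abs_of_nonneg (by positivity)]
    ring
  have hpc_le : dist p (m + (-h) • v) ≤ r := hp _ hcx hcy
  have hsq : ‖z‖ ^ 2 + (‖w‖ + h) ^ 2 ≤ r ^ 2 := hpc ▸ pow_le_pow_left₀ dist_nonneg hpc_le 2
  have hwr : ‖w‖ + h ≤ r :=
    (pow_le_pow_iff_left₀ (by positivity) hr two_ne_zero).1 (by nlinarith [sq_nonneg ‖z‖])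
  have hzxy : ‖z‖ ≤ dist x y / 2 :=
    (pow_le_pow_iff_left₀ (norm_nonneg z) (by positivity) two_ne_zero).1
      (by nlinarith [norm_nonneg w])
  calc infDist p (segment ℝ x y) ≤ dist p (m + z) :=
        infDist_le_dist_of_mem (midpoint_add_mem_segment hz hzxy)
    _ = ‖w‖ := by rw [dist_eq_norm, ← sub_sub, hpzw, add_sub_cancel_left]
    _ ≤ r - h := by linarith

lemma midpoint_add_smul_mem_spindle {v : E} (hv : ‖v‖ = 1) {r h : ℝ} (hh : 0 ≤ h) (hhr : h ≤ r)
    (hrh : r ^ 2 = h ^ 2 + (dist x y / 2) ^ 2) :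
    midpoint ℝ x y + (r - h) • v ∈ spindle x y r := by
  intro c hcx hcy
  rw [mem_closedBall]
  calc dist (midpoint ℝ x y + (r - h) • v) c
      ≤ dist (midpoint ℝ x y + (r - h) • v) (midpoint ℝ x y) + dist (midpoint ℝ x y) c :=
        dist_triangle _ _ _
    _ = (r - h) + h := by
      rw [dist_self_add_left, norm_smul, hv, mul_one, Real.norm_eq_abs, abs_of_nonneg (by linarith),
        dist_comm, dist_midpoint_of_dist_eq_of_dist_eq hh hrh hcx hcy]
    _ = r := by ring

theorem iSup_infDist_segment_spindle [Nontrivial (ℝ ∙ (y - x))ᗮ] {r : ℝ} (hxy : dist x y ≤ 2 * r) :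
    ⨆ p ∈ spindle x y r, infDist p (segment ℝ x y) = r - √(r ^ 2 - dist x y ^ 2 / 4) := by
  set h := √(r ^ 2 - dist x y ^ 2 / 4)
  have hr : 0 ≤ r := by linarith [dist_nonneg (x := x) (y := y)]
  have hh : 0 ≤ h := Real.sqrt_nonneg _
  have hrh : r ^ 2 = h ^ 2 + (dist x y / 2) ^ 2 := by
    rw [Real.sq_sqrt (by nlinarith [dist_nonneg (x := x) (y := y)])]
    ring
  have hhr : h ≤ r := by nlinarith
  obtain ⟨u, huK, hu⟩ := (ℝ ∙ (y - x))ᗮ.exists_norm_eq_one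
  have huxy : ⟪u, y - x⟫ = 0 := mem_orthogonal_singleton_iff_inner_left.1 huK
  refine Real.biSup_eq_of_forall_le_of_le (sub_nonneg.2 hhr)
    (fun p hp => infDist_segment_le_of_mem_spindle hr hh hrh hp)
    (midpoint_add_smul_mem_spindle hu hh hhr hrh) ?_
  calc r - h = |⟪u, midpoint ℝ x y + (r - h) • u - x⟫| := by
        rw [add_sub_right_comm, midpoint_sub_left, inner_add_right, inner_smul_right,
          inner_smul_right, huxy, real_inner_self_eq_norm_sq, hu]
        simp [abs_of_nonneg (sub_nonneg.2 hhr)]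
    _ ≤ _ := abs_inner_sub_le_infDist_segment hu huxy _

end

theorem stmt2_general (r : ℝ) (x y : EuclideanSpace ℝ (Fin 2))
    (hxy : dist x y < 2 * r) :
    (⨆ p ∈ {p : EuclideanSpace ℝ (Fin 2) |
        ∀ c : EuclideanSpace ℝ (Fin 2), dist c x = r → dist c y = r → p ∈ closedBall c r},
      Metric.infDist p (segment ℝ x y)) =
    r - Real.sqrt (r ^ 2 - dist x y ^ 2 / 4) := by
  have := nontrivial_orthogonal_span_singleton (by simp) (y - x)
  exact iSup_infDist_segment_spindle hxy.le

/-- The maximal distance from a point of the `r`-spindle `S(L,r)` around a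
segment `L` of length `< 2r` to the segment is `r − √(r² − |L|²/4)`. -/
theorem stmt2 (r : ℝ) (hr : 0 < r) (x y : EuclideanSpace ℝ (Fin 2))
    (hxy : dist x y < 2 * r) :
    (⨆ p ∈ {p : EuclideanSpace ℝ (Fin 2) |
        ∀ c : EuclideanSpace ℝ (Fin 2), dist c x = r → dist c y = r → p ∈ closedBall c r},
      Metric.infDist p (segment ℝ x y)) =
    r - Real.sqrt (r ^ 2 - dist x y ^ 2 / 4) :=
  stmt2_general r x y hxy
end

section
/- Let X ⊆ ℝ² be r-regular and let x, y ∈ ∂X with ‖x − y‖ < 2r, and let L be the segment between them. Then the image π(L) of L under the nearest-point projection π onto ∂X is contained in every closed ball of radius at most r containing L. -/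
/-!
Let `z ∈ L`, `p = π z` and `d = ‖z - p‖ > 0`, `u = (z - p) / d`. The open ball `B(z, d)` misses
`∂X`, so it lies on one side of `∂X`. The tangent ball at `p` on the other side is disjoint from
it and touches it at `p`, so its centre is `p - r u` and the tangent ball on the side of `z` is
`B(p + r u, r)`, which also misses `∂X`. Hence `x, y ∉ B(p + s u, s)`, so
both are at least as close to `c` as to `p + s u`. That set is a half-space, so it contains `z`,
giving `‖z - c‖ ≤ ‖z - (p + s u)‖ = s - d` (here `d ≤ s` because `z` is within `s` of `x` or `y`),
and finally `‖p - c‖ ≤ d + (s - d) = s`.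
-/

open Metric

def IsRRegular {α : Type*} [PseudoMetricSpace α] (r : ℝ) (X : Set α) : Prop :=
  ∀ p ∈ frontier X, ∃ xb xw : α, closedBall xb r ⊆ X ∧ closedBall xw r ⊆ closure Xᶜ ∧
    closedBall xb r ∩ closedBall xw r = {p}

theorem disjoint_ball_frontier_of_closedBall_subset {α : Type*} [PseudoMetricSpace α]
    {X : Set α} {a : α} {r : ℝ} (h : closedBall a r ⊆ X) : Disjoint (ball a r) (frontier X) := by
  rw [← frontier_compl]
  exact (disjoint_compl_right.mono_left (ball_subset_closedBall.trans h)).frontier_right isOpen_ball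

section NormedSpace

variable {V : Type*} [NormedAddCommGroup V] [NormedSpace ℝ V]

theorem midpoint_eq_of_closedBall_inter_closedBall_eq {a b p : V} {r : ℝ}
    (h : closedBall a r ∩ closedBall b r = {p}) : midpoint ℝ a b = p := by
  have hp : p ∈ closedBall a r ∩ closedBall b r := h.ge rfl
  have hab : dist a b ≤ 2 * r := by
    linarith [dist_triangle_left a b p, mem_closedBall.1 hp.1, mem_closedBall.1 hp.2]
  have hmid : midpoint ℝ a b ∈ closedBall a r ∩ closedBall b r := by
    constructor <;> rw [mem_closedBall]
    · rw [dist_midpoint_left, Real.norm_two]; linarith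
    · rw [dist_midpoint_right, Real.norm_two]; linarith
  rwa [h] at hmid

theorem eq_add_of_midpoint_eq {a b p v : V} (h : midpoint ℝ a b = p) (hb : b = p - v) :
    a = p + v := by
  rw [midpoint_eq_smul_add, invOf_eq_inv, hb] at h
  linear_combination (norm := module) (2 : ℝ) • h

theorem IsRRegular.frontier_subset_closure_interior {X : Set V} {r : ℝ} (h : IsRRegular r X)
    (hr : 0 < r) : frontier X ⊆ closure (interior X) := by
  intro q hq
  obtain ⟨xb, _, hb, _, hq'⟩ := h q hq
  have hqb : q ∈ closedBall xb r := (hq'.ge rfl).1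
  rw [← closure_ball xb hr.ne'] at hqb
  exact closure_mono (interior_maximal (ball_subset_closedBall.trans hb) isOpen_ball) hqb

theorem IsRRegular.disjoint_ball_frontier_of_closedBall_subset_closure_compl {X : Set V} {r : ℝ}
    (h : IsRRegular r X) (hr : 0 < r) {a : V} (ha : closedBall a r ⊆ closure Xᶜ) :
    Disjoint (ball a r) (frontier X) := by
  rw [closure_compl] at ha
  have hint : Disjoint (ball a r) (interior X) :=
    Set.subset_compl_iff_disjoint_right.mp (ball_subset_closedBall.trans ha)
  exact (hint.closure_right isOpen_ball).mono_right (h.frontier_subset_closure_interior hr)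

theorem infDist_le_of_mem_segment {S : Set V} {x y z c : V} {s : ℝ} (hx : x ∈ S) (hy : y ∈ S)
    (hz : z ∈ segment ℝ x y) (hxc : x ∈ closedBall c s) (hyc : y ∈ closedBall c s) :
    infDist z S ≤ s := by
  have hxz := infDist_le_dist_of_mem hx (x := z)
  have hzy := infDist_le_dist_of_mem hy (x := z)
  have hxy : dist x y ≤ 2 * s := by
    linarith [dist_triangle_right x y c, mem_closedBall.1 hxc, mem_closedBall.1 hyc]
  linarith [dist_add_dist_of_mem_segment hz, dist_comm x z]

theorem eq_sub_smul_of_disjoint_ball [StrictConvexSpace ℝ V] {z p o : V} {r : ℝ} (hr : 0 < r)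
    (hzp : z ≠ p) (hpo : dist p o ≤ r) (h : Disjoint (ball z (dist z p)) (ball o r)) :
    o = p - r • (dist z p)⁻¹ • (z - p) := by
  have hd : 0 < dist z p := dist_pos.2 hzp
  have hsep := (disjoint_ball_ball_iff hd hr).1 h
  have hpo' : dist p o = r := le_antisymm hpo (by linarith [dist_triangle z p o])
  have hray : SameRay ℝ (p - z) (o - p) := by
    rw [← vsub_eq_sub, ← vsub_eq_sub, ← wbtw_iff_sameRay_vsub, ← dist_add_dist_eq_iff]
    exact le_antisymm (by linarith) (dist_triangle z p o)
  have hscale := congrArg ((dist z p)⁻¹ • ·) hray.norm_smul_eq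
  simp only [← dist_eq_norm', hpo', smul_smul, inv_mul_cancel₀ hd.ne', one_smul] at hscale
  linear_combination (norm := module) hscale

theorem IsRRegular.disjoint_ball_frontier_of_infDist_eq [StrictConvexSpace ℝ V] {X : Set V} {r : ℝ}
    (h : IsRRegular r X) (hr : 0 < r) {p z : V} (hp : p ∈ frontier X) (hzp : z ≠ p)
    (hz : dist z p = infDist z (frontier X)) :
    Disjoint (ball (p + r • (dist z p)⁻¹ • (z - p)) r) (frontier X) := by
  obtain ⟨xb, xw, hb, hw, hbw⟩ := h p hp
  have hmid := midpoint_eq_of_closedBall_inter_closedBall_eq hbw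
  have hpb : dist p xb ≤ r := mem_closedBall.1 (hbw.ge rfl).1
  have hpw : dist p xw ≤ r := mem_closedBall.1 (hbw.ge rfl).2
  have hzF : Disjoint (ball z (dist z p)) (frontier X) := hz ▸ disjoint_ball_infDist
  have hside : ball z (dist z p) ⊆ interior X ∨ ball z (dist z p) ⊆ interior Xᶜ :=
    (convex_ball z _).isPreconnected.subset_or_subset isOpen_interior isOpen_interior
      (disjoint_compl_right.mono interior_subset interior_subset)
      (compl_frontier_eq_union_interior (s := X) ▸ hzF.subset_compl_right)
  rcases hside with hin | hout
  · have hdisj : Disjoint (ball z (dist z p)) (ball xw r) := by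
      refine Set.disjoint_of_subset hin (ball_subset_closedBall.trans hw) ?_
      rw [closure_compl]
      exact disjoint_compl_right
    rw [← eq_add_of_midpoint_eq hmid (eq_sub_smul_of_disjoint_ball hr hzp hpw hdisj)]
    exact disjoint_ball_frontier_of_closedBall_subset hb
  · have hdisj : Disjoint (ball z (dist z p)) (ball xb r) :=
      Set.disjoint_of_subset (hout.trans interior_subset) (ball_subset_closedBall.trans hb)
        disjoint_compl_left
    rw [← eq_add_of_midpoint_eq ((midpoint_comm ..).trans hmid)
      (eq_sub_smul_of_disjoint_ball hr hzp hpb hdisj)]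
    exact h.disjoint_ball_frontier_of_closedBall_subset_closure_compl hr hw

end NormedSpace

section InnerProductSpace

variable {F : Type*} [NormedAddCommGroup F] [InnerProductSpace ℝ F]

theorem convex_setOf_dist_le_dist (c o : F) : Convex ℝ {w | dist w c ≤ dist w o} := by
  have hset : {w | dist w c ≤ dist w o} = {w | 2 * inner ℝ w (o - c) ≤ ‖o‖ ^ 2 - ‖c‖ ^ 2} := by
    ext w
    rw [Set.mem_ofPred_eq, Set.mem_ofPred_eq, ← sq_le_sq₀ dist_nonneg dist_nonneg, dist_eq_norm,
      dist_eq_norm, norm_sub_sq_real, norm_sub_sq_real, inner_sub_right]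
    constructor <;> intro <;> linarith
  rw [hset]
  refine convex_halfSpace_le ⟨fun v w => ?_, fun a v => ?_⟩ _
  · rw [inner_add_left]; ring
  · rw [real_inner_smul_left, smul_eq_mul]; ring

theorem ball_add_smul_subset_ball_add_smul {p u : F} {s r : ℝ} (hu : ‖u‖ = 1) (hsr : s ≤ r) :
    ball (p + s • u) s ⊆ ball (p + r • u) r := by
  refine ball_subset_ball' ?_
  rw [dist_add_left, dist_eq_norm, ← sub_smul, norm_smul, hu, mul_one, Real.norm_eq_abs,
    abs_of_nonpos (by linarith)]
  linarith

theorem mem_closedBall_of_add_smul_mem_segment {x y p c u : F} {s d : ℝ} (hu : ‖u‖ = 1)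
    (hd : 0 ≤ d) (hds : d ≤ s) (hz : p + d • u ∈ segment ℝ x y)
    (hx : x ∈ closedBall c s) (hy : y ∈ closedBall c s)
    (hxo : x ∉ ball (p + s • u) s) (hyo : y ∉ ball (p + s • u) s) : p ∈ closedBall c s := by
  have hcloser : ∀ w ∈ closedBall c s, w ∉ ball (p + s • u) s →
      w ∈ {w | dist w c ≤ dist w (p + s • u)} :=
    fun w hwc hwo => (mem_closedBall.1 hwc).trans (not_lt.1 hwo)
  have hzc := (convex_setOf_dist_le_dist c (p + s • u)).segment_subset
    (hcloser x hx hxo) (hcloser y hy hyo) hz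
  have hzo : dist (p + d • u) (p + s • u) = s - d := by
    rw [dist_add_left, dist_eq_norm, ← sub_smul, norm_smul, hu, mul_one, Real.norm_eq_abs,
      abs_of_nonpos (by linarith)]
    ring
  have hpz : dist p (p + d • u) = d := by
    rw [dist_self_add_right, norm_smul, hu, mul_one, Real.norm_of_nonneg hd]
  rw [mem_closedBall]
  calc dist p c ≤ dist p (p + d • u) + dist (p + d • u) c := dist_triangle _ _ _
    _ ≤ d + (s - d) := add_le_add hpz.le (hzc.trans hzo.le)
    _ = s := by ring

end InnerProductSpace

theorem stmt16_general (r : ℝ) (hr : 0 < r) (X : Set (EuclideanSpace ℝ (Fin 2)))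
    (hreg : ∀ p ∈ frontier X, ∃ xb xw : EuclideanSpace ℝ (Fin 2),
        closedBall xb r ⊆ X ∧ closedBall xw r ⊆ closure Xᶜ ∧
        closedBall xb r ∩ closedBall xw r = {p})
    (π : EuclideanSpace ℝ (Fin 2) → EuclideanSpace ℝ (Fin 2))
    (hπ : ∀ z, infDist z (frontier X) < r →
        π z ∈ frontier X ∧ dist z (π z) = infDist z (frontier X))
    (x y : EuclideanSpace ℝ (Fin 2)) (hx : x ∈ frontier X) (hy : y ∈ frontier X)
    (hL : ∀ z ∈ segment ℝ x y, infDist z (frontier X) < r) :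
    ∀ (c : EuclideanSpace ℝ (Fin 2)) (s : ℝ), s ≤ r →
      segment ℝ x y ⊆ closedBall c s →
      ∀ z ∈ segment ℝ x y, π z ∈ closedBall c s := by
  intro c s hsr hLc z hz
  obtain ⟨hpF, hzp⟩ := hπ z (hL z hz)
  rcases eq_or_ne z (π z) with hfix | hne
  · exact hfix ▸ hLc hz
  have hd : 0 < dist z (π z) := dist_pos.2 hne
  set u := (dist z (π z))⁻¹ • (z - π z)
  have hu : ‖u‖ = 1 := by
    rw [norm_smul, norm_inv, ← dist_eq_norm, Real.norm_of_nonneg hd.le, inv_mul_cancel₀ hd.ne']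
  have hzu : π z + dist z (π z) • u = z := by
    rw [smul_inv_smul₀ hd.ne', add_sub_cancel]
  have hxc := hLc (left_mem_segment ℝ x y)
  have hyc := hLc (right_mem_segment ℝ x y)
  have hfree := (IsRRegular.disjoint_ball_frontier_of_infDist_eq hreg hr hpF hne hzp).mono_left
    (ball_add_smul_subset_ball_add_smul hu hsr)
  exact mem_closedBall_of_add_smul_mem_segment hu hd.le
    (hzp ▸ infDist_le_of_mem_segment hx hy hz hxc hyc) (hzu.symm ▸ hz) hxc hyc
    (Set.disjoint_right.1 hfree hx) (Set.disjoint_right.1 hfree hy)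

/-- For an `r`-regular closed set `X ⊆ ℝ²` and boundary points `x, y` with
`‖x − y‖ < 2r`, the image under the nearest-point projection `π` onto `∂X`
of the segment `L` between `x` and `y` is contained in every closed ball of
radius at most `r` containing `L`. -/
theorem stmt16 (r : ℝ) (hr : 0 < r) (X : Set (EuclideanSpace ℝ (Fin 2)))
    (hX : IsClosed X)
    (hreg : ∀ p ∈ frontier X, ∃ xb xw : EuclideanSpace ℝ (Fin 2),
        closedBall xb r ⊆ X ∧ closedBall xw r ⊆ closure Xᶜ ∧
        closedBall xb r ∩ closedBall xw r = {p})
    (π : EuclideanSpace ℝ (Fin 2) → EuclideanSpace ℝ (Fin 2))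
    (hπ : ∀ z, infDist z (frontier X) < r →
        π z ∈ frontier X ∧ dist z (π z) = infDist z (frontier X))
    (x y : EuclideanSpace ℝ (Fin 2)) (hx : x ∈ frontier X) (hy : y ∈ frontier X)
    (hxy : dist x y < 2 * r)
    (hL : ∀ z ∈ segment ℝ x y, infDist z (frontier X) < r) :
    ∀ (c : EuclideanSpace ℝ (Fin 2)) (s : ℝ), s ≤ r →
      segment ℝ x y ⊆ closedBall c s →
      ∀ z ∈ segment ℝ x y, π z ∈ closedBall c s :=
  stmt16_general r hr X hreg π hπ x y hx hy hL
end

section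
/- Let γ : S¹ → ℝ² be a continuous injective closed curve (Jordan curve) whose image is contained in a closed annular region M ⊆ ℝ² that is homeomorphic to S¹ × [−1,1] via a homeomorphism h, with h(∂-components) being S¹×{−1} and S¹×{1}. Then the image of γ separates the two boundary circles of M: every continuous path in ℝ² from a point of h⁻¹(S¹×{−1}) to a point of h⁻¹(S¹×{1}) that stays in M meets the image of γ, provided γ is not null-homotopic in M. -/
/-!
Embed the annulus in `ℂ` as `1 ≤ ‖w‖ ≤ 3`. If the path `σ` missed the loop `γ`, then inside
`ℂ ∖ {0}` the loop could be translated by `-σ t` for `t` running from `0` to `1` without ever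
hitting `0`. Because `σ 0` lies on the inner and `σ 1` on the outer boundary circle, straight-line
homotopies connect the loop to its first translate and its last translate to a constant. Retracting
`ℂ ∖ {0}` onto the annulus then makes `γ` null-homotopic in `M`.
-/

open ContinuousMap Set

section

open unitInterval

variable {X Y : Type*} [TopologicalSpace X] [TopologicalSpace Y]

theorem ContinuousMap.Homotopic.of_forall_mem {s : Set Y} {f g : C(X, s)} (H : C(I × X, Y))
    (hH : ∀ p, H p ∈ s) (h0 : ∀ x, H (0, x) = f x) (h1 : ∀ x, H (1, x) = g x) :
    f.Homotopic g :=
  ⟨{ toContinuousMap := ⟨_, H.continuous.codRestrict hH⟩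
     map_zero_left := fun x => Subtype.ext (h0 x)
     map_one_left := fun x => Subtype.ext (h1 x) }⟩

end

section

open unitInterval

variable {X E : Type*} [TopologicalSpace X] [NormedAddCommGroup E] [NormedSpace ℝ E]

theorem smul_ne_of_norm_le {u v : E} {t : ℝ} (ht : t ∈ Icc (0 : ℝ) 1) (hvu : ‖v‖ ≤ ‖u‖)
    (hne : u ≠ v) : t • v ≠ u := by
  rintro rfl
  rw [norm_smul, Real.norm_of_nonneg ht.1] at hvu
  rcases eq_or_ne v 0 with rfl | hv
  · simp at hne
  · have : t = 1 := le_antisymm ht.2 (le_of_mul_le_mul_right (by linarith) (norm_pos_iff.2 hv))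
    simp [this] at hne

theorem ContinuousMap.nullhomotopic_of_forall_ne_path [Nonempty X] (f : C(X, ({0}ᶜ : Set E)))
    (c : C(I, E)) (hc0 : ∀ x, ‖c 0‖ ≤ ‖(f x : E)‖) (hc1 : ∀ x, ‖(f x : E)‖ ≤ ‖c 1‖)
    (hfc : ∀ x t, (f x : E) ≠ c t) : f.Nullhomotopic := by
  have hc1_ne : c 1 ≠ 0 := by
    obtain ⟨x⟩ := ‹Nonempty X›
    exact norm_pos_iff.1 ((norm_pos_iff.2 (f x).2).trans_le (hc1 x))
  let g : I → C(X, ({0}ᶜ : Set E)) := fun t =>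
    ⟨fun x => ⟨f x - c t, sub_ne_zero.2 (hfc x t)⟩, by fun_prop⟩
  have hfg : f.Homotopic (g 0) :=
    .of_forall_mem ⟨fun p => (f p.2 : E) - (p.1 : ℝ) • c 0, by fun_prop⟩
      (fun p => sub_ne_zero.2 (smul_ne_of_norm_le p.1.2 (hc0 _) (hfc _ _)).symm)
      (by simp) (by simp [g])
  have hg : (g 0).Homotopic (g 1) :=
    .of_forall_mem ⟨fun p => (f p.2 : E) - c p.1, by fun_prop⟩
      (fun p => sub_ne_zero.2 (hfc _ _)) (by simp [g]) (by simp [g])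
  have hg_const : (g 1).Homotopic (const X ⟨-c 1, neg_ne_zero.2 hc1_ne⟩) :=
    .of_forall_mem ⟨fun p => ((σ p.1 : I) : ℝ) • (f p.2 : E) - c 1, by fun_prop⟩
      (fun p => sub_ne_zero.2 (smul_ne_of_norm_le (σ p.1).2 (hc1 _) (hfc _ _).symm))
      (by simp [g]) (by simp)
  exact ⟨_, hfg.trans (hg.trans hg_const)⟩

end

noncomputable def annulusEmbedding : C(Circle × Icc (-1 : ℝ) 1, ({0}ᶜ : Set ℂ)) :=
  ⟨fun p => ⟨((2 + p.2 : ℝ) : ℂ) * p.1, mul_ne_zero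
      (Complex.ofReal_ne_zero.2 (by linarith [p.2.2.1])) (Circle.coe_ne_zero p.1)⟩,
    by fun_prop⟩

noncomputable def annulusRetraction : C(({0}ᶜ : Set ℂ), Circle × Icc (-1 : ℝ) 1) :=
  ⟨fun w => (⟨w / ‖(w : ℂ)‖, by simp [Submonoid.unitSphere, mem_compl_singleton_iff.1 w.2]⟩,
    projIcc (-1) 1 (by norm_num) (‖(w : ℂ)‖ - 2)), by
    have (w : ({0}ᶜ : Set ℂ)) : (‖(w : ℂ)‖ : ℂ) ≠ 0 := by simp [mem_compl_singleton_iff.1 w.2]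
    fun_prop (disch := exact this)⟩

theorem norm_annulusEmbedding (p : Circle × Icc (-1 : ℝ) 1) :
    ‖(annulusEmbedding p : ℂ)‖ = 2 + p.2 := by
  simp only [annulusEmbedding, coe_mk, norm_mul, Complex.norm_real, Circle.norm_coe, mul_one]
  exact Real.norm_of_nonneg (by linarith [p.2.2.1])

theorem annulusRetraction_annulusEmbedding (p : Circle × Icc (-1 : ℝ) 1) :
    annulusRetraction (annulusEmbedding p) = p := by
  have hpos : (0 : ℝ) < 2 + p.2 := by linarith [p.2.2.1]
  ext
  · simp only [annulusRetraction, coe_mk, norm_annulusEmbedding]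
    exact mul_div_cancel_left₀ _ (Complex.ofReal_ne_zero.2 hpos.ne')
  · simp [annulusRetraction, norm_annulusEmbedding]

theorem stmt18_general (M : Set (EuclideanSpace ℝ (Fin 2)))
    (h : M ≃ₜ Circle × Set.Icc (-1 : ℝ) 1)
    (γ : C(Circle, M))
    (hγnontriv : ¬ ∃ x : M, γ.Homotopic (ContinuousMap.const Circle x))
    (σ : C(unitInterval, M))
    (hσ0 : ((h (σ 0)).2 : ℝ) = -1) (hσ1 : ((h (σ 1)).2 : ℝ) = 1) :
    ∃ (t : unitInterval) (s : Circle), σ t = γ s := by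
  by_contra! hσγ
  let e : C(M, ({0}ᶜ : Set ℂ)) := annulusEmbedding.comp (h : C(M, Circle × Icc (-1 : ℝ) 1))
  let r : C(({0}ᶜ : Set ℂ), M) :=
    (h.symm : C(Circle × Icc (-1 : ℝ) 1, M)).comp annulusRetraction
  have hre : Function.LeftInverse r e := fun x => by
    simp [r, e, annulusRetraction_annulusEmbedding]
  have hnorm (x : M) : ‖(e x : ℂ)‖ = 2 + (h x).2 := norm_annulusEmbedding (h x)
  have hnull : (e.comp γ).Nullhomotopic := by
    refine nullhomotopic_of_forall_ne_path _ ⟨fun t => (e (σ t) : ℂ), by fun_prop⟩ ?_ ?_ ?_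
    · intro s
      simp only [coe_mk, comp_apply, hnorm, hσ0]
      linarith [(h (γ s)).2.2.1]
    · intro s
      simp only [coe_mk, comp_apply, hnorm, hσ1]
      linarith [(h (γ s)).2.2.2]
    · exact fun s t hst => hσγ t s (hre.injective (Subtype.ext hst)).symm
  have hγ : r.comp (e.comp γ) = γ := ContinuousMap.ext fun s => hre (γ s)
  exact hγnontriv (hγ ▸ hnull.comp_right r)

/-- A continuous injective closed curve in a closed annular region
`M ≃ₜ S¹ × [−1,1]` that is not null-homotopic in `M` separates the two
boundary circles of `M`: any path in `M` from the `S¹ × {−1}` boundary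
component to the `S¹ × {1}` boundary component meets the image of the curve. -/
theorem stmt18 (M : Set (EuclideanSpace ℝ (Fin 2))) (hMc : IsCompact M)
    (h : M ≃ₜ Circle × Set.Icc (-1 : ℝ) 1)
    (γ : C(Circle, M)) (hγinj : Function.Injective γ)
    (hγnontriv : ¬ ∃ x : M, γ.Homotopic (ContinuousMap.const Circle x))
    (σ : C(unitInterval, M))
    (hσ0 : ((h (σ 0)).2 : ℝ) = -1) (hσ1 : ((h (σ 1)).2 : ℝ) = 1) :
    ∃ (t : unitInterval) (s : Circle), σ t = γ s :=
  stmt18_general M h γ hγnontriv σ hσ0 hσ1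
end

section
/- Define f : [0,1] → ℝ by f(x) = (√7 − 1/2)x for x ≤ 1/2 and f(x) = −(√7 − 1/2)x + (√7 − 1/2) for x ≥ 1/2, and define x₂ : [0,1] → ℝ by x₂(x) = √(8 − (1+x)²) − 3/2 − √(2/(1+x)² − 1/4). Then x₂(x) ≤ f(x) for all x ∈ [0,1]. -/
/-!
On `[1/2, 1]` both square roots are replaced by their tangent lines at `x = 1`:
`√(8 - (1+x)²) ≤ 3 - x` and `1 - x/2 ≤ √(2/(1+x)² - 1/4)`, which leaves `(1 - x)/2` on the left.
On `[0, 1/2]` the first root is at most `√7`, and the second is bounded below by the line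
`(8/3 - 1/2)(1 - x) - 1`, where `8/3 ≥ √7`.
-/

namespace Real

lemma sqrt_eight_sub_one_add_sq_le_sqrt_seven {x : ℝ} (hx : 0 ≤ x) :
    √(8 - (1 + x) ^ 2) ≤ √7 :=
  sqrt_le_sqrt (by nlinarith)

lemma sqrt_eight_sub_one_add_sq_le {x : ℝ} (hx : x ≤ 3) :
    √(8 - (1 + x) ^ 2) ≤ 3 - x :=
  sqrt_le_iff.mpr ⟨by linarith, by nlinarith [sq_nonneg (x - 1)]⟩

lemma one_sub_half_le_sqrt_two_div_one_add_sq_sub {x : ℝ} (hx : -1 < x) (hx3 : x ^ 2 ≤ 3) :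
    1 - x / 2 ≤ √(2 / (1 + x) ^ 2 - 1 / 4) := by
  have hpos : 0 < (1 + x) ^ 2 := pow_pos (by linarith) 2
  apply le_sqrt_of_sq_le
  rw [le_sub_iff_add_le, le_div_iff₀ hpos]
  -- `2 - ((1 - x/2)² + 1/4)(1 + x)² = (x - 1)²(3 - x²)/4`
  nlinarith [mul_nonneg (sq_nonneg (x - 1)) (sub_nonneg.mpr hx3)]

lemma le_sqrt_two_div_one_add_sq_sub {x : ℝ} (hx0 : 0 ≤ x) (hx1 : x ≤ 1 / 2) :
    7 / 6 - 13 * x / 6 ≤ √(2 / (1 + x) ^ 2 - 1 / 4) := by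
  have hpos : 0 < (1 + x) ^ 2 := by positivity
  apply le_sqrt_of_sq_le
  rw [le_sub_iff_add_le, le_div_iff₀ hpos]
  nlinarith [mul_nonneg (mul_nonneg hx0 hx0) (sub_nonneg.mpr hx1),
    mul_nonneg (mul_nonneg (mul_nonneg hx0 hx0) hx0) (sub_nonneg.mpr hx1)]

lemma sqrt_seven_le : √7 ≤ 8 / 3 :=
  sqrt_le_iff.mpr ⟨by norm_num, by norm_num⟩

end Real

open Real in
/-- The function `x₂(x) = √(8 − (1+x)²) − 3/2 − √(2/(1+x)² − 1/4)` lies below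
the piecewise-linear function `f` with `f(x) = (√7 − 1/2)x` for `x ≤ 1/2` and
`f(x) = −(√7 − 1/2)x + (√7 − 1/2)` for `x ≥ 1/2`, on all of `[0,1]`. -/
theorem stmt19 :
    ∀ x ∈ Set.Icc (0 : ℝ) 1,
      Real.sqrt (8 - (1 + x) ^ 2) - 3 / 2 -
          Real.sqrt (2 / (1 + x) ^ 2 - 1 / 4) ≤
        (if x ≤ 1 / 2 then (Real.sqrt 7 - 1 / 2) * x
          else -(Real.sqrt 7 - 1 / 2) * x + (Real.sqrt 7 - 1 / 2)) := by
  rintro x ⟨hx0, hx1⟩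
  split_ifs with hx
  · have hA := sqrt_eight_sub_one_add_sq_le_sqrt_seven hx0
    have hB := le_sqrt_two_div_one_add_sq_sub hx0 hx
    nlinarith [mul_nonneg (sub_nonneg.mpr sqrt_seven_le) (sub_nonneg.mpr hx1)]
  · have hA := sqrt_eight_sub_one_add_sq_le (x := x) (by linarith)
    have hB := one_sub_half_le_sqrt_two_div_one_add_sq_sub (x := x) (by linarith) (by nlinarith)
    have hs : 1 ≤ √7 := one_le_sqrt.mpr (by norm_num)
    nlinarith [mul_nonneg (sub_nonneg.mpr hs) (sub_nonneg.mpr hx1)]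
end
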